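/- arXiv:0710.4309 — 7 statements merged into one kernel-verified Lean document; each statement's English description precedes it below -/
import Mathlib

section
/- Let A be an associative algebra and q a scalar. The multiplication (a,x) *_q (b,y) := (ab, ay + xb + qxy) on A ⊕ A is associative, and both A ⊕ 0 and 0 ⊕ A are subalgebras (so A ⊕ A with *_q is a twilled algebra). -/
/-- The multiplication `(a,x) *_q (b,y) = (ab, ay + xb + q·xy)` on `A ⊕ A`. -/
def tmulq {k A : Type*} [CommRing k] [Ring A] [Algebra k A]
    (q : k) (p r : A × A) : A × A :=
  (p.1 * r.1, p.1 * r.2 + p.2 * r.1 + q • (p.2 * r.2))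

theorem qTrivialExtension_twilled {k A : Type*} [CommRing k] [Ring A] [Algebra k A] (q : k) :
    (∀ p r s : A × A, tmulq q (tmulq q p r) s = tmulq q p (tmulq q r s)) ∧
    (∀ a b : A, ∃ c : A, tmulq q ((a, 0) : A × A) (b, 0) = (c, 0)) ∧
    (∀ x y : A, ∃ z : A, tmulq q ((0, x) : A × A) (0, y) = (0, z)) := by
  refine ⟨fun p r s => ?_, fun a b => ⟨a * b, by simp [tmulq]⟩,
    fun x y => ⟨q • (x * y), by simp [tmulq]⟩⟩
  simp only [tmulq, Prod.mk.injEq]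
  constructor
  · rw [mul_assoc]
  · simp only [mul_add, add_mul, smul_mul_assoc, mul_smul_comm, smul_add, smul_smul]
    simp only [mul_assoc, smul_smul]
    abel
end

section
/- Let π: M → A be a generalized Rota-Baxter operator of weight zero, and let M_π denote M equipped with the associative multiplication m ×_π n = π(m)·n + m·π(n). Then A becomes an M_π-bimodule via m ·_π b := π(m)b − π(m·b) and a ·_π n := aπ(n) − π(a·n); that is, these actions satisfy the bimodule axioms (m ×_π n)·_π b = m ·_π (n ·_π b), etc., with respect to the algebra M_π. -/
/-- The multiplication `m ×_π n = π(m)·n + m·π(n)` on a bimodule `M` induced by `π : M → A`. -/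
def grbMul {k A M : Type*} [CommRing k] [Ring A] [Algebra k A]
    [AddCommGroup M] [Module k M] [Module A M] [Module Aᵐᵒᵖ M] [SMulCommClass A Aᵐᵒᵖ M]
    (π : M →ₗ[k] A) (m n : M) : M :=
  π m • n + MulOpposite.op (π n) • m

/-- The left action `m ·_π b = π(m)b − π(m·b)` of `M_π` on `A`. -/
def grbLact {k A M : Type*} [CommRing k] [Ring A] [Algebra k A]
    [AddCommGroup M] [Module k M] [Module A M] [Module Aᵐᵒᵖ M] [SMulCommClass A Aᵐᵒᵖ M]
    (π : M →ₗ[k] A) (m : M) (b : A) : A :=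
  π m * b - π (MulOpposite.op b • m)

/-- The right action `a ·_π n = aπ(n) − π(a·n)` of `M_π` on `A`. -/
def grbRact {k A M : Type*} [CommRing k] [Ring A] [Algebra k A]
    [AddCommGroup M] [Module k M] [Module A M] [Module Aᵐᵒᵖ M] [SMulCommClass A Aᵐᵒᵖ M]
    (π : M →ₗ[k] A) (a : A) (n : M) : A :=
  a * π n - π (a • n)

theorem generalizedRotaBaxter_bimodule {k A M : Type*} [CommRing k] [Ring A] [Algebra k A]
    [AddCommGroup M] [Module k M] [Module A M] [Module Aᵐᵒᵖ M] [SMulCommClass A Aᵐᵒᵖ M]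
    (π : M →ₗ[k] A)
    (hπ : ∀ m n : M, π m * π n = π (π m • n + MulOpposite.op (π n) • m)) :
    (∀ (m n : M) (a : A), grbLact π (grbMul π m n) a = grbLact π m (grbLact π n a)) ∧
    (∀ (a : A) (m n : M), grbRact π a (grbMul π m n) = grbRact π (grbRact π a m) n) ∧
    (∀ (m : M) (a : A) (n : M),
      grbLact π m (grbRact π a n) = grbRact π (grbLact π m a) n) := by
  refine ⟨?_, ?_, ?_⟩
  · intro m n a
    simp only [grbLact, grbMul, ← hπ m n]
    rw [mul_sub, hπ m (MulOpposite.op a • n)]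
    simp only [map_add, map_sub, smul_add, MulOpposite.op_sub, MulOpposite.op_mul, sub_smul,
      smul_smul, mul_assoc]
    rw [smul_comm (π m) (MulOpposite.op a) n]
    abel
  · intro a m n
    simp only [grbRact, grbMul, ← hπ m n]
    rw [sub_mul, hπ (a • m) n]
    simp only [map_add, map_sub, smul_add, sub_smul, smul_smul, mul_assoc]
    rw [smul_comm a (MulOpposite.op (π n)) m]
    abel
  · intro m a n
    simp only [grbLact, grbRact]
    rw [mul_sub, hπ m (a • n), sub_mul, hπ (MulOpposite.op a • m) n]
    simp only [map_add, map_sub, MulOpposite.op_sub, MulOpposite.op_mul, sub_smul, smul_smul,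
      smul_add, mul_assoc]
    abel
end

section
/- Let π: M → A be a generalized Rota-Baxter operator of weight zero. Then the multiplication on A ⊕ M given by (a,m)*(b,n) := (ab + a·_π n + m·_π b, a·n + m·b + m ×_π n), where m·_π b = π(m)b − π(m·b), a·_π n = aπ(n) − π(a·n), and m ×_π n = π(m)·n + m·π(n), is associative. -/
/-- The multiplication of the twilled algebra `A ⋈ M_π`. -/
def grbTwilledMul {k A M : Type*} [CommRing k] [Ring A] [Algebra k A]
    [AddCommGroup M] [Module k M] [Module A M] [Module Aᵐᵒᵖ M] [SMulCommClass A Aᵐᵒᵖ M]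
    (π : M →ₗ[k] A) (p r : A × M) : A × M :=
  (p.1 * r.1 + (p.1 * π r.2 - π (p.1 • r.2)) + (π p.2 * r.1 - π (MulOpposite.op r.1 • p.2)),
    p.1 • r.2 + MulOpposite.op r.1 • p.2 + (π p.2 • r.2 + MulOpposite.op (π r.2) • p.2))

set_option maxHeartbeats 2000000 in
theorem generalizedRotaBaxter_twilled_assoc {k A M : Type*} [CommRing k] [Ring A] [Algebra k A]
    [AddCommGroup M] [Module k M] [Module A M] [Module Aᵐᵒᵖ M] [SMulCommClass A Aᵐᵒᵖ M]
    (π : M →ₗ[k] A)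
    (hπ : ∀ m n : M, π m * π n = π (π m • n + MulOpposite.op (π n) • m)) :
    ∀ p r s : A × M,
      grbTwilledMul π (grbTwilledMul π p r) s = grbTwilledMul π p (grbTwilledMul π r s) := by
  have h1 : ∀ x y z : M, π x • π y • z = π (π x • y) • z + π (MulOpposite.op (π y) • x) • z := by
    intro x y z; rw [← mul_smul, hπ, map_add, add_smul]
  have h2 : ∀ x y z : M, MulOpposite.op (π x) • MulOpposite.op (π y) • z
      = MulOpposite.op (π (π y • x)) • z + MulOpposite.op (π (MulOpposite.op (π x) • y)) • z := by
    intro x y z; rw [← mul_smul, ← MulOpposite.op_mul, hπ, map_add, MulOpposite.op_add, add_smul]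
  have h3 : ∀ (x y : M) (z : A), π x * (π y * z) = π (π x • y) * z + π (MulOpposite.op (π y) • x) * z := by
    intro x y z; rw [← mul_assoc, hπ, map_add, add_mul]
  rintro ⟨a, m⟩ ⟨b, n⟩ ⟨c, u⟩
  simp only [grbTwilledMul, Prod.mk.injEq]
  constructor
  · simp only [map_add, map_sub, mul_add, add_mul, mul_sub, sub_mul, smul_add, add_smul,
      smul_sub, sub_smul, mul_smul, MulOpposite.op_mul, MulOpposite.op_add, MulOpposite.op_sub,
      hπ, mul_assoc]
    simp only [h3, smul_comm]
    abel
  · simp only [map_add, map_sub, mul_add, add_mul, mul_sub, sub_mul, smul_add, add_smul,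
      smul_sub, sub_smul, mul_smul, MulOpposite.op_mul, MulOpposite.op_add, MulOpposite.op_sub,
      hπ, mul_assoc]
    simp only [h1, h2, smul_comm]
    abel
end

section
/- If N: A → A is an associative Nijenhuis operator, i.e., N(x)N(y) = N(N(x)y + xN(y)) − N²(xy) for all x, y, then x ×_N y := N(x)y + xN(y) − N(xy) is an associative multiplication on A, and moreover the multiplications are compatible: for every scalar t, x·y + t(x ×_N y) is associative. -/
/-- The deformed multiplication `x ×_N y = N(x)y + xN(y) − N(xy)`. -/
def nijMul {k A : Type*} [CommRing k] [Ring A] [Algebra k A]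
    (N : A →ₗ[k] A) (x y : A) : A := N x * y + x * N y - N (x * y)

theorem nijenhuis_assoc_and_compatible {k A : Type*} [CommRing k] [Ring A] [Algebra k A]
    (N : A →ₗ[k] A)
    (hN : ∀ x y : A, N x * N y = N (N x * y + x * N y) - N (N (x * y))) :
    (∀ x y z : A, nijMul N (nijMul N x y) z = nijMul N x (nijMul N y z)) ∧
    (∀ t : k, ∀ x y z : A,
      ((x * y + t • nijMul N x y) * z + t • nijMul N (x * y + t • nijMul N x y) z) =
        (x * (y * z + t • nijMul N y z) + t • nijMul N x (y * z + t • nijMul N y z))) := by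
  have hN' : ∀ x y : A, N (N x * y + x * N y - N (x * y)) = N x * N y := by
    intro x y
    rw [map_sub, ← hN]
  have hassoc : ∀ x y z : A, nijMul N (nijMul N x y) z = nijMul N x (nijMul N y z) := by
    intro x y z
    simp only [nijMul]
    rw [hN', hN']
    simp only [sub_mul, add_mul, mul_sub, mul_add, map_add, map_sub]
    rw [hN (x * y) z, hN x (y * z)]
    simp only [map_add, map_sub, mul_assoc]
    abel
  refine ⟨hassoc, fun t x y z => ?_⟩
  have hl : ∀ (a b c : A) (s : k),
      nijMul N (a + s • b) c = nijMul N a c + s • nijMul N b c := by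
    intro a b c s
    simp only [nijMul, map_add, map_smul, add_mul, smul_mul_assoc, smul_sub, smul_add]
    abel
  have hr : ∀ (a b c : A) (s : k),
      nijMul N a (b + s • c) = nijMul N a b + s • nijMul N a c := by
    intro a b c s
    simp only [nijMul, map_add, map_smul, mul_add, mul_smul_comm, smul_sub, smul_add]
    abel
  rw [hl, hr, hassoc]
  simp only [nijMul, smul_add, smul_sub, add_mul, mul_add, sub_mul, mul_sub,
    smul_mul_assoc, mul_smul_comm, map_add, map_sub, map_smul, mul_assoc]
  module
end

section
/- Let A be an associative algebra, M an A-bimodule, and π: M → A a generalized Rota-Baxter operator of weight zero. Suppose Ω: A → M satisfies (i) Ω(ab) = a·Ω(b) + Ω(a)·b (derivation property), and (ii) Ω(a) ×_π Ω(b) = Ω(Ω(a)·_π b + a·_π Ω(b)), where m ×_π n = π(m)·n + m·π(n), m·_π b = π(m)b − π(m·b), a·_π n = aπ(n) − π(a·n). Then N := π∘Ω is an associative Nijenhuis operator on A: N(a)N(b) = N(N(a)b + aN(b)) − N(N(ab)) for all a, b ∈ A. -/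
theorem strongMaurerCartan_gives_nijenhuis {k A M : Type*} [CommRing k] [Ring A] [Algebra k A]
    [AddCommGroup M] [Module k M] [Module A M] [Module Aᵐᵒᵖ M] [SMulCommClass A Aᵐᵒᵖ M]
    (π : M →ₗ[k] A)
    (hπ : ∀ m n : M, π m * π n = π (π m • n + MulOpposite.op (π n) • m))
    (Ω : A →ₗ[k] M)
    (hΩ1 : ∀ a b : A, Ω (a * b) = a • Ω b + MulOpposite.op b • Ω a)
    (hΩ2 : ∀ a b : A,
      grbMul π (Ω a) (Ω b) = Ω (grbLact π (Ω a) b + grbRact π a (Ω b))) :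
    ∀ a b : A,
      π (Ω a) * π (Ω b) =
        π (Ω (π (Ω a) * b + a * π (Ω b))) - π (Ω (π (Ω (a * b)))) := by
  intro a b
  have h1 : π (Ω a) * π (Ω b) = π (grbMul π (Ω a) (Ω b)) := hπ _ _
  have h2 : grbLact π (Ω a) b + grbRact π a (Ω b)
      = (π (Ω a) * b + a * π (Ω b)) - π (Ω (a * b)) := by
    simp only [grbLact, grbRact, hΩ1, map_add]
    abel
  rw [h1, hΩ2, h2, map_sub, map_sub]
end

section
/- Under the hypotheses of the previous statement (π a generalized Rota-Baxter operator and Ω a strong Maurer-Cartan operator, N = π∘Ω), the composition N∘π: M → A is again a generalized Rota-Baxter operator of weight zero: (Nπ)(m)(Nπ)(n) = (Nπ)((Nπ)(m)·n + m·(Nπ)(n)) for all m, n ∈ M. -/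
theorem nPi_is_generalizedRotaBaxter {k A M : Type*} [CommRing k] [Ring A] [Algebra k A]
    [AddCommGroup M] [Module k M] [Module A M] [Module Aᵐᵒᵖ M] [SMulCommClass A Aᵐᵒᵖ M]
    (π : M →ₗ[k] A)
    (hπ : ∀ m n : M, π m * π n = π (π m • n + MulOpposite.op (π n) • m))
    (Ω : A →ₗ[k] M)
    (hΩ1 : ∀ a b : A, Ω (a * b) = a • Ω b + MulOpposite.op b • Ω a)
    (hΩ2 : ∀ a b : A,
      grbMul π (Ω a) (Ω b) = Ω (grbLact π (Ω a) b + grbRact π a (Ω b))) :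
    ∀ m n : M,
      π (Ω (π m)) * π (Ω (π n)) =
        π (Ω (π (π (Ω (π m)) • n + MulOpposite.op (π (Ω (π n))) • m))) := by
  intro m n
  have key : grbLact π (Ω (π m)) (π n) + grbRact π (π m) (Ω (π n)) =
      π (π (Ω (π m)) • n + MulOpposite.op (π (Ω (π n))) • m) := by
    unfold grbLact grbRact
    rw [hπ (Ω (π m)) n, hπ m (Ω (π n))]
    simp only [map_add]
    abel
  calc π (Ω (π m)) * π (Ω (π n))
      = π (grbMul π (Ω (π m)) (Ω (π n))) := by rw [grbMul, hπ]
    _ = π (Ω (grbLact π (Ω (π m)) (π n) + grbRact π (π m) (Ω (π n)))) := by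
        rw [hΩ2]
    _ = _ := by rw [key]
end

section
/- Let T = A₁ ⊕ A₂ be a twilled algebra: an associative algebra with multiplication * such that A₁ and A₂ are subalgebras. Write, for a ∈ A₁, x ∈ A₂: a*x = (a*₂x, a*₁x) and x*a = (x*₂a, x*₁a) for the components in A₁ and A₂. If H: A₂ → A₁ satisfies the Maurer-Cartan equation H(x)*₁H(y) + H(x)*₂y + x*₂H(y) = H(H(x)*₁y + x*₁H(y)) + H(x*₂y) for all x,y ∈ A₂, then x ×_H y := H(x)*₁y + x*₁H(y) + x*₂y is an associative multiplication on A₂. -/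
/-- The total multiplication of a twilled algebra `A₁ ⋈ A₂` from its component operations. -/
def twilledTotalMul {A₁ A₂ : Type*} [AddCommGroup A₁] [AddCommGroup A₂]
    (mA : A₁ → A₁ → A₁) (mX : A₂ → A₂ → A₂)
    (l1 : A₁ → A₂ → A₂) (r1 : A₂ → A₁ → A₂)
    (l2 : A₁ → A₂ → A₁) (r2 : A₂ → A₁ → A₁)
    (p q : A₁ × A₂) : A₁ × A₂ :=
  (mA p.1 q.1 + l2 p.1 q.2 + r2 p.2 q.1, l1 p.1 q.2 + r1 p.2 q.1 + mX p.2 q.2)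

theorem maurerCartan_gives_assoc {k A₁ A₂ : Type*} [Field k]
    [AddCommGroup A₁] [Module k A₁] [AddCommGroup A₂] [Module k A₂]
    (mA : A₁ → A₁ → A₁) (mX : A₂ → A₂ → A₂)
    (l1 : A₁ → A₂ → A₂) (r1 : A₂ → A₁ → A₂)
    (l2 : A₁ → A₂ → A₁) (r2 : A₂ → A₁ → A₁)
    (hassoc : ∀ p q r : A₁ × A₂,
      twilledTotalMul mA mX l1 r1 l2 r2 (twilledTotalMul mA mX l1 r1 l2 r2 p q) r =
        twilledTotalMul mA mX l1 r1 l2 r2 p (twilledTotalMul mA mX l1 r1 l2 r2 q r))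
    (H : A₂ →ₗ[k] A₁)
    (hMC : ∀ x y : A₂,
      mA (H x) (H y) + l2 (H x) y + r2 x (H y) =
        H (l1 (H x) y + r1 x (H y)) + H (mX x y)) :
    ∀ x y z : A₂,
      (l1 (H (l1 (H x) y + r1 x (H y) + mX x y)) z +
        r1 (l1 (H x) y + r1 x (H y) + mX x y) (H z) +
        mX (l1 (H x) y + r1 x (H y) + mX x y) z) =
      (l1 (H x) (l1 (H y) z + r1 y (H z) + mX y z) +
        r1 x (H (l1 (H y) z + r1 y (H z) + mX y z)) +
        mX x (l1 (H y) z + r1 y (H z) + mX y z)) := by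
  intro x y z
  -- The graph of H is multiplicatively closed:
  have hgraph : ∀ u v : A₂,
      twilledTotalMul mA mX l1 r1 l2 r2 (H u, u) (H v, v) =
        (H (l1 (H u) v + r1 u (H v) + mX u v), l1 (H u) v + r1 u (H v) + mX u v) := by
    intro u v
    simp only [twilledTotalMul, Prod.mk.injEq, map_add]
    constructor
    · have := hMC u v
      rw [map_add] at this
      linear_combination (norm := abel) this
    · trivial
  have h := hassoc (H x, x) (H y, y) (H z, z)
  rw [hgraph x y, hgraph y z, hgraph (l1 (H x) y + r1 x (H y) + mX x y) z,
    hgraph x (l1 (H y) z + r1 y (H z) + mX y z)] at h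
  exact congrArg Prod.snd h
end
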